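/- Let G be a first order endotactic mass-action system on ℕ₀^d. Then in each stoichiometric compatibility class (x₀ + S_G) ∩ ℝ₊^d, where S_G = span{y'−y : (y,y') ∈ E}, the ODE ẋ = xA + b has exactly one equilibrium, and this equilibrium is entrywise positive whenever the class has nonempty interior in x₀ + S_G relative to ℝ₊^d (i.e., is a positive stoichiometric compatibility class). -/

import Mathlib

open Matrix Finset
open scoped Matrix Classical

abbrev Vec (d : ℕ) := Fin d → ℝ
abbrev Edge (d : ℕ) := Vec d × Vec d

/-- Sources of edges whose reaction vector is not orthogonal to `u`. -/
def srcU {d : ℕ} (E : Finset (Edge d)) (u : Vec d) : Set (Vec d) :=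
  {y | ∃ y', (y, y') ∈ E ∧ (y' - y) ⬝ᵥ u ≠ 0}

/-- `G` is `u`-endotactic: no `u`-endotacticity violating reaction. -/
def uEndotactic {d : ℕ} (E : Finset (Edge d)) (u : Vec d) : Prop :=
  ¬ ∃ y y', (y, y') ∈ E ∧ 0 < (y' - y) ⬝ᵥ u ∧ ∀ z ∈ srcU E u, z ⬝ᵥ u ≤ y ⬝ᵥ u

def Endotactic {d : ℕ} (E : Finset (Edge d)) : Prop := ∀ u : Vec d, uEndotactic E u

/-- Reachability by a directed path. -/
def Reach {d : ℕ} (E : Finset (Edge d)) : Vec d → Vec d → Prop :=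
  Relation.ReflTransGen (fun a b => (a, b) ∈ E)

def IsEig {d : ℕ} (A : Matrix (Fin d) (Fin d) ℝ) (μ : ℂ) : Prop :=
  ∃ v : Fin d → ℂ, v ≠ 0 ∧ (A.map Complex.ofReal).mulVec v = μ • v

def InV {d : ℕ} (E : Finset (Edge d)) (y : Vec d) : Prop :=
  ∃ e ∈ E, e.1 = y ∨ e.2 = y

def IsSource {d : ℕ} (E : Finset (Edge d)) (y : Vec d) : Prop :=
  ∃ y', (y, y') ∈ E

/-- The stoichiometric subspace: the span of the reaction vectors. -/
def stoichSpan (d : ℕ) (E : Finset (Edge d)) : Submodule ℝ (Vec d) :=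
  Submodule.span ℝ {v | ∃ e ∈ E, v = e.2 - e.1}

/-!
The flux matrix `A` is Metzler (nonnegative off the diagonal) with nonpositive row sums, and the row
sum of species `i` is negative exactly when there is a reaction `i → 0`. Testing endotacticity
against indicator vectors of sets of species shows that the species that cannot reach the zero
complex fall into strongly connected classes which no reaction enters or leaves; their class sums
`∑ j ∈ C, x j` vanish on `S_G`.

If `x A ≤ 0`, the set `{x < 0}` is closed under reactions and has no outflow, so it avoids every
species that reaches `0`, and it is a union of classes: `x ≥ 0` as soon as all class sums of `x` are
nonnegative. Applied to `±v`, this makes `v ↦ v A` injective on `S_G`. Since the rows of `A` and the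
influx `b` lie in `S_G`, this map is an endomorphism of `S_G`, hence onto, and solving
`v A = -(x₀ A + b)` gives the equilibrium `x₀ + v`. Dually, the zero set of a nonnegative equilibrium
is closed under predecessors and receives no influx; endotacticity then confines it to classes,
where it would force a class sum to vanish.
-/

open Relation

section Metzler

variable {ι : Type*} {M : Matrix ι ι ℝ}

theorem mul_apply_nonneg_of_apply_eq_zero (hM : ∀ i j, i ≠ j → 0 ≤ M i j) {u : ι → ℝ}
    (hu : 0 ≤ u) {j : ι} (huj : u j = 0) (i : ι) : 0 ≤ u i * M i j := by
  by_cases hij : i = j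
  · rw [hij, huj, zero_mul]
  · exact mul_nonneg (hu i) (hM i j hij)

variable [Fintype ι]

theorem sum_filter_neg_eq_zero_of_vecMul_nonpos (hM : ∀ i j, i ≠ j → 0 ≤ M i j)
    (hrow : ∀ i, ∑ j, M i j ≤ 0) {x : ι → ℝ} (hx : ∀ j, (x ᵥ* M) j ≤ 0) {i : ι} (hi : x i < 0) :
    ∑ j with x j < 0, M i j = 0 := by
  set s : ι → ℝ := fun k => ∑ j with x j < 0, M k j
  have hterm : ∀ k, 0 ≤ x k * s k := by
    intro k
    by_cases hk : x k < 0
    · have hout : 0 ≤ ∑ j with ¬ x j < 0, M k j :=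
        sum_nonneg fun j hj => hM k j fun h => (mem_filter.1 hj).2 (h ▸ hk)
      have hsplit := sum_filter_add_sum_filter_not univ (fun j => x j < 0) (M k)
      exact mul_nonneg_of_nonpos_of_nonpos hk.le (by linarith [hrow k])
    · exact mul_nonneg (not_lt.1 hk)
        (sum_nonneg fun j hj => hM k j fun h => hk (h ▸ (mem_filter.1 hj).2))
  have htotal : ∑ k, x k * s k = ∑ j with x j < 0, (x ᵥ* M) j := by
    simp only [s, vecMul, dotProduct, mul_sum]
    exact sum_comm
  have hsum : ∑ k, x k * s k = 0 :=
    le_antisymm (htotal ▸ sum_nonpos fun j _ => hx j) (sum_nonneg fun k _ => hterm k)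
  have hi0 := (sum_eq_zero_iff_of_nonneg fun k _ => hterm k).1 hsum i (mem_univ i)
  exact (mul_eq_zero.1 hi0).resolve_left hi.ne

theorem sum_filter_not_neg_eq_zero_of_vecMul_nonpos (hM : ∀ i j, i ≠ j → 0 ≤ M i j)
    (hrow : ∀ i, ∑ j, M i j ≤ 0) {x : ι → ℝ} (hx : ∀ j, (x ᵥ* M) j ≤ 0) {i : ι} (hi : x i < 0) :
    ∑ j with ¬ x j < 0, M i j = 0 := by
  have hout : 0 ≤ ∑ j with ¬ x j < 0, M i j :=
    sum_nonneg fun j hj => hM i j fun h => (mem_filter.1 hj).2 (h ▸ hi)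
  have hsplit := sum_filter_add_sum_filter_not univ (fun j => x j < 0) (M i)
  linarith [hrow i, sum_filter_neg_eq_zero_of_vecMul_nonpos hM hrow hx hi]

theorem row_sum_eq_zero_of_vecMul_nonpos (hM : ∀ i j, i ≠ j → 0 ≤ M i j)
    (hrow : ∀ i, ∑ j, M i j ≤ 0) {x : ι → ℝ} (hx : ∀ j, (x ᵥ* M) j ≤ 0) {i : ι} (hi : x i < 0) :
    ∑ j, M i j = 0 := by
  rw [← sum_filter_add_sum_filter_not univ (fun j => x j < 0),
    sum_filter_neg_eq_zero_of_vecMul_nonpos hM hrow hx hi,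
    sum_filter_not_neg_eq_zero_of_vecMul_nonpos hM hrow hx hi, add_zero]

theorem neg_of_vecMul_nonpos (hM : ∀ i j, i ≠ j → 0 ≤ M i j)
    (hrow : ∀ i, ∑ j, M i j ≤ 0) {x : ι → ℝ} (hx : ∀ j, (x ᵥ* M) j ≤ 0) {i j : ι} (hi : x i < 0)
    (hij : 0 < M i j) : x j < 0 := by
  by_contra hj
  have hle : M i j ≤ ∑ k with ¬ x k < 0, M i k :=
    single_le_sum (f := M i) (s := univ.filter fun k => ¬ x k < 0)
      (fun k hk => hM i k fun h => (mem_filter.1 hk).2 (h ▸ hi)) (mem_filter.2 ⟨mem_univ j, hj⟩)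
  linarith [sum_filter_not_neg_eq_zero_of_vecMul_nonpos hM hrow hx hi]

theorem vecMul_apply_eq_zero_of_apply_eq_zero (hM : ∀ i j, i ≠ j → 0 ≤ M i j) {u : ι → ℝ}
    (hu : 0 ≤ u) {j : ι} (huj : u j = 0) (hj : (u ᵥ* M) j ≤ 0) : (u ᵥ* M) j = 0 :=
  le_antisymm hj (sum_nonneg fun i _ => mul_apply_nonneg_of_apply_eq_zero hM hu huj i)

theorem apply_eq_zero_of_vecMul_apply_nonpos (hM : ∀ i j, i ≠ j → 0 ≤ M i j) {u : ι → ℝ}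
    (hu : 0 ≤ u) {i j : ι} (huj : u j = 0) (hj : (u ᵥ* M) j ≤ 0) (hij : 0 < M i j) : u i = 0 := by
  have h := (sum_eq_zero_iff_of_nonneg fun k _ => mul_apply_nonneg_of_apply_eq_zero hM hu huj k).1
    (vecMul_apply_eq_zero_of_apply_eq_zero hM hu huj hj) i (mem_univ i)
  exact (mul_eq_zero.1 h).resolve_right hij.ne'

end Metzler

theorem Relation.ReflTransGen.mem_of_forall_mem {α : Type*} {r : α → α → Prop} {W : Set α}
    (hW : ∀ a b, r a b → a ∈ W → b ∈ W) {a b : α} (h : ReflTransGen r a b) (ha : a ∈ W) :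
    b ∈ W := by
  induction h with
  | refl => exact ha
  | tail _ hbc ih => exact hW _ _ hbc ih

theorem Relation.ReflTransGen.mem_of_forall_mem_rev {α : Type*} {r : α → α → Prop} {W : Set α}
    (hW : ∀ a b, r a b → b ∈ W → a ∈ W) {a b : α} (h : ReflTransGen r a b) (hb : b ∈ W) :
    a ∈ W :=
  by_contra fun ha => h.mem_of_forall_mem (W := Wᶜ) (fun a b hab ha hb => ha (hW a b hab hb)) ha hb

variable {d : ℕ}

noncomputable def fluxMatrix (E : Finset (Edge d)) (κ : Edge d → ℝ) : Matrix (Fin d) (Fin d) ℝ :=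
  fun i j => ∑ e ∈ E.filter (fun e => e.1 = (Pi.single i 1 : Vec d)), κ e * (e.2 j - e.1 j)

noncomputable def influx (E : Finset (Edge d)) (κ : Edge d → ℝ) : Vec d :=
  fun i => ∑ e ∈ E.filter (fun e => e.1 = (0 : Vec d)), κ e * e.2 i

structure IsFirstOrderEndotactic (E : Finset (Edge d)) : Prop where
  natural : ∀ y, InV E y → ∀ i, ∃ n : ℕ, y i = (n : ℝ)
  firstOrder : ∀ y, IsSource E y → ∑ i, y i ≤ 1
  endotactic : Endotactic E

def Flows (E : Finset (Edge d)) (i j : Fin d) : Prop :=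
  ((Pi.single i 1 : Vec d), (Pi.single j 1 : Vec d)) ∈ E

def Leaks (E : Finset (Edge d)) (i : Fin d) : Prop := ((Pi.single i 1 : Vec d), (0 : Vec d)) ∈ E

def ReachesZero (E : Finset (Edge d)) (i : Fin d) : Prop :=
  ∃ l, Leaks E l ∧ ReflTransGen (Flows E) i l

/-- For `i` that does not reach the zero complex, this is the species set `I` of the monomolecular
component of `G•` containing `i`. -/
noncomputable def reachable (E : Finset (Edge d)) (i : Fin d) : Finset (Fin d) :=
  univ.filter (ReflTransGen (Flows E) i)

theorem mem_reachable {E : Finset (Edge d)} {i j : Fin d} :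
    j ∈ reachable E i ↔ ReflTransGen (Flows E) i j := by
  simp [reachable]

theorem self_mem_reachable (E : Finset (Edge d)) (i : Fin d) : i ∈ reachable E i :=
  mem_reachable.2 .refl

theorem eq_zero_or_eq_single_of_sum_le_one {y : Vec d} (hy : ∀ i, ∃ n : ℕ, y i = n)
    (hs : ∑ i, y i ≤ 1) : y = 0 ∨ ∃ i, y = Pi.single i 1 := by
  choose n hn using hy
  have hnn : ∀ i, 0 ≤ y i := fun i => hn i ▸ Nat.cast_nonneg _
  rcases eq_or_ne y 0 with h0 | h0
  · exact Or.inl h0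
  obtain ⟨i, hi⟩ := Function.ne_iff.1 h0
  have hyi : 1 ≤ y i := by
    rw [Pi.zero_apply, hn i] at hi
    rw [hn i]
    exact_mod_cast Nat.one_le_iff_ne_zero.2 (by exact_mod_cast hi)
  have hsplit := add_sum_erase univ y (mem_univ i)
  have hrest : ∀ j ∈ univ.erase i, y j = 0 :=
    (sum_eq_zero_iff_of_nonneg fun j _ => hnn j).1
      (le_antisymm (by linarith) (sum_nonneg fun j _ => hnn j))
  refine Or.inr ⟨i, funext fun j => ?_⟩
  by_cases hji : j = i
  · subst hji
    have : ∑ j ∈ univ.erase j, y j = 0 := sum_eq_zero hrest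
    simp only [Pi.single_eq_same]
    linarith
  · rw [Pi.single_eq_of_ne hji, hrest j (mem_erase.2 ⟨hji, mem_univ j⟩)]

theorem Endotactic.dotProduct_sub_nonpos {E : Finset (Edge d)} (h : Endotactic E)
    {y y' u : Vec d} (he : (y, y') ∈ E) (hmax : ∀ z ∈ srcU E u, z ⬝ᵥ u ≤ y ⬝ᵥ u) :
    (y' - y) ⬝ᵥ u ≤ 0 :=
  not_lt.1 fun hpos => h u ⟨y, y', he, hpos, hmax⟩

theorem not_reachesZero_of_mem {E : Finset (Edge d)} {W : Set (Fin d)}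
    (hclosed : ∀ i j, Flows E i j → i ∈ W → j ∈ W) (hleak : ∀ i ∈ W, ¬ Leaks E i) {i : Fin d}
    (hi : i ∈ W) : ¬ ReachesZero E i :=
  fun ⟨l, hl, hil⟩ => hleak l (hil.mem_of_forall_mem hclosed hi) hl

namespace IsFirstOrderEndotactic

variable {E : Finset (Edge d)}

theorem snd_nonneg (hE : IsFirstOrderEndotactic E) {e : Edge d} (he : e ∈ E) (i : Fin d) :
    0 ≤ e.2 i := by
  obtain ⟨n, hn⟩ := hE.natural e.2 ⟨e, he, Or.inr rfl⟩ i
  exact hn ▸ Nat.cast_nonneg n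

theorem fst_eq_zero_or_single (hE : IsFirstOrderEndotactic E) {y y' : Vec d} (he : (y, y') ∈ E) :
    y = 0 ∨ ∃ i, y = Pi.single i 1 :=
  eq_zero_or_eq_single_of_sum_le_one (hE.natural y ⟨_, he, Or.inl rfl⟩) (hE.firstOrder y ⟨y', he⟩)

theorem sum_snd_le_one (hE : IsFirstOrderEndotactic E) {i : Fin d} {y' : Vec d}
    (he : (Pi.single i 1, y') ∈ E) : ∑ j, y' j ≤ 1 := by
  have h := hE.endotactic.dotProduct_sub_nonpos he (u := 1) fun z ⟨z', hz, _⟩ => by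
    simpa [dotProduct_one] using hE.firstOrder z ⟨z', hz⟩
  simp only [dotProduct_one, Pi.sub_apply, sum_sub_distrib, sum_pi_single', mem_univ,
    if_true] at h
  linarith

theorem snd_eq_zero_or_single (hE : IsFirstOrderEndotactic E) {i : Fin d} {y' : Vec d}
    (he : (Pi.single i 1, y') ∈ E) : y' = 0 ∨ ∃ j, y' = Pi.single j 1 :=
  eq_zero_or_eq_single_of_sum_le_one (hE.natural y' ⟨_, he, Or.inr rfl⟩) (hE.sum_snd_le_one he)

section ClosedSet

variable {W : Set (Fin d)}

theorem dotProduct_indicator_nonpos_of_mem_srcU (hE : IsFirstOrderEndotactic E)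
    (hclosed : ∀ i j, Flows E i j → i ∈ W → j ∈ W) (hleak : ∀ i ∈ W, ¬ Leaks E i) {z : Vec d}
    (hz : z ∈ srcU E (W.indicator 1)) : z ⬝ᵥ W.indicator 1 ≤ 0 := by
  obtain ⟨y', hzy', hne⟩ := hz
  rcases hE.fst_eq_zero_or_single hzy' with rfl | ⟨t, rfl⟩
  · simp
  rw [single_one_dotProduct]
  by_cases ht : t ∈ W
  · exfalso
    rcases hE.snd_eq_zero_or_single hzy' with rfl | ⟨m, rfl⟩
    · exact hleak t ht hzy'
    · apply hne
      rw [sub_dotProduct, single_one_dotProduct, single_one_dotProduct,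
        Set.indicator_of_mem (hclosed t m hzy' ht), Set.indicator_of_mem ht]
      simp
  · rw [Set.indicator_of_notMem ht]

theorem mem_of_flows_of_mem (hE : IsFirstOrderEndotactic E)
    (hclosed : ∀ i j, Flows E i j → i ∈ W → j ∈ W) (hleak : ∀ i ∈ W, ¬ Leaks E i)
    {i j : Fin d} (hij : Flows E i j) (hj : j ∈ W) : i ∈ W := by
  by_contra hi
  have h := hE.endotactic.dotProduct_sub_nonpos hij (u := W.indicator 1) fun z hz => by
    rw [single_one_dotProduct, Set.indicator_of_notMem hi]
    exact hE.dotProduct_indicator_nonpos_of_mem_srcU hclosed hleak hz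
  rw [sub_dotProduct, single_one_dotProduct, single_one_dotProduct, Set.indicator_of_mem hj,
    Set.indicator_of_notMem hi] at h
  norm_num at h

theorem snd_apply_eq_zero_of_mem (hE : IsFirstOrderEndotactic E)
    (hclosed : ∀ i j, Flows E i j → i ∈ W → j ∈ W) (hleak : ∀ i ∈ W, ¬ Leaks E i)
    {y' : Vec d} (he : ((0 : Vec d), y') ∈ E) {j : Fin d} (hj : j ∈ W) : y' j = 0 := by
  have h := hE.endotactic.dotProduct_sub_nonpos he (u := W.indicator 1) fun z hz => by
    rw [zero_dotProduct]
    exact hE.dotProduct_indicator_nonpos_of_mem_srcU hclosed hleak hz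
  have hle : y' j * W.indicator 1 j ≤ y' ⬝ᵥ W.indicator 1 :=
    single_le_sum (f := fun k => y' k * W.indicator 1 k)
      (fun k _ => mul_nonneg (hE.snd_nonneg he k) (Set.indicator_nonneg (fun _ _ => zero_le_one) k))
      (mem_univ j)
  rw [Set.indicator_of_mem hj, Pi.one_apply, mul_one] at hle
  rw [sub_zero] at h
  exact le_antisymm (by linarith) (hE.snd_nonneg he j)

end ClosedSet

section NoInflux

variable {W : Set (Fin d)}

theorem dotProduct_neg_indicator_le_of_mem_srcU (hE : IsFirstOrderEndotactic E)
    (hpred : ∀ i j, Flows E i j → j ∈ W → i ∈ W)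
    (hfeed : ∀ y', ((0 : Vec d), y') ∈ E → ∀ j ∈ W, y' j = 0) {z : Vec d}
    (hz : z ∈ srcU E (-W.indicator 1)) : z ⬝ᵥ -W.indicator 1 ≤ -1 := by
  obtain ⟨y', hzy', hne⟩ := hz
  rcases hE.fst_eq_zero_or_single hzy' with rfl | ⟨t, rfl⟩
  · refine absurd ?_ hne
    rw [sub_zero, dotProduct_neg, neg_eq_zero]
    refine sum_eq_zero fun k _ => ?_
    by_cases hk : k ∈ W
    · rw [hfeed y' hzy' k hk, zero_mul]
    · rw [Set.indicator_of_notMem hk, mul_zero]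
  by_cases ht : t ∈ W
  · rw [single_one_dotProduct, Pi.neg_apply, Set.indicator_of_mem ht, Pi.one_apply]
  refine absurd ?_ hne
  rcases hE.snd_eq_zero_or_single hzy' with rfl | ⟨m, rfl⟩
  · simp [Set.indicator_of_notMem ht]
  · have hm : m ∉ W := fun hm => ht (hpred t m hzy' hm)
    simp [Set.indicator_of_notMem ht, Set.indicator_of_notMem hm]

theorem not_reachesZero_of_mem_of_no_influx (hE : IsFirstOrderEndotactic E)
    (hpred : ∀ i j, Flows E i j → j ∈ W → i ∈ W)
    (hfeed : ∀ y', ((0 : Vec d), y') ∈ E → ∀ j ∈ W, y' j = 0) {i : Fin d} (hi : i ∈ W) :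
    ¬ ReachesZero E i := by
  have hu : ∀ t, (Pi.single t 1 : Vec d) ⬝ᵥ -W.indicator 1 = -W.indicator 1 t := fun t =>
    single_one_dotProduct t _
  have hmax : ∀ k ∈ W, ∀ z ∈ srcU E (-W.indicator 1),
      z ⬝ᵥ -W.indicator 1 ≤ Pi.single k 1 ⬝ᵥ -W.indicator 1 := fun k hk z hz => by
    rw [hu, Set.indicator_of_mem hk, Pi.one_apply]
    exact hE.dotProduct_neg_indicator_le_of_mem_srcU hpred hfeed hz
  have hleak : ∀ k ∈ W, ¬ Leaks E k := fun k hk hl => by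
    have h := hE.endotactic.dotProduct_sub_nonpos hl (hmax k hk)
    rw [sub_dotProduct, zero_dotProduct, hu, Set.indicator_of_mem hk] at h
    norm_num at h
  have hclosed : ∀ a b, Flows E a b → a ∈ W → b ∈ W := fun a b hab ha => by
    by_contra hb
    have h := hE.endotactic.dotProduct_sub_nonpos hab (hmax a ha)
    rw [sub_dotProduct, hu, hu, Set.indicator_of_mem ha, Set.indicator_of_notMem hb] at h
    norm_num at h
  exact not_reachesZero_of_mem hclosed hleak hi

end NoInflux

theorem reach_symm (hE : IsFirstOrderEndotactic E) {i j : Fin d} (hi : ¬ ReachesZero E i)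
    (hij : ReflTransGen (Flows E) i j) : ReflTransGen (Flows E) j i := by
  have hj : ¬ ReachesZero E j := fun ⟨l, hl, hjl⟩ => hi ⟨l, hl, hij.trans hjl⟩
  exact hij.mem_of_forall_mem_rev (W := {k | ReflTransGen (Flows E) j k})
    (fun a b hab hb => hE.mem_of_flows_of_mem (fun _ _ hab ha => ReflTransGen.tail ha hab)
      (fun k hk hl => hj ⟨k, hl, hk⟩) hab hb) .refl

variable {κ : Edge d → ℝ}

theorem flux_term_nonneg (hE : IsFirstOrderEndotactic E) (hκ : ∀ e ∈ E, 0 < κ e) {i j : Fin d}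
    (hij : i ≠ j) {e : Edge d} (he : e ∈ E.filter fun e => e.1 = Pi.single i 1) :
    0 ≤ κ e * (e.2 j - e.1 j) := by
  obtain ⟨heE, h1⟩ := mem_filter.1 he
  rw [h1, Pi.single_eq_of_ne hij.symm, sub_zero]
  exact mul_nonneg (hκ e heE).le (hE.snd_nonneg heE j)

theorem fluxMatrix_apply_nonneg (hE : IsFirstOrderEndotactic E) (hκ : ∀ e ∈ E, 0 < κ e)
    {i j : Fin d} (hij : i ≠ j) : 0 ≤ fluxMatrix E κ i j :=
  sum_nonneg fun _ he => hE.flux_term_nonneg hκ hij he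

theorem fluxMatrix_apply_pos (hE : IsFirstOrderEndotactic E) (hκ : ∀ e ∈ E, 0 < κ e)
    {i j : Fin d} (hij : i ≠ j) (h : Flows E i j) : 0 < fluxMatrix E κ i j :=
  sum_pos' (fun _ he => hE.flux_term_nonneg hκ hij he) ⟨_, mem_filter.2 ⟨h, rfl⟩, by
    simpa [Pi.single_eq_of_ne hij.symm] using hκ _ h⟩

theorem sum_fluxMatrix_row (i : Fin d) : ∑ j, fluxMatrix E κ i j =
    ∑ e ∈ E.filter (fun e => e.1 = Pi.single i 1), κ e * (∑ j, e.2 j - 1) := by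
  unfold fluxMatrix
  rw [sum_comm]
  refine sum_congr rfl fun e he => ?_
  rw [(mem_filter.1 he).2, ← mul_sum, sum_sub_distrib, sum_pi_single', if_pos (mem_univ i)]

theorem sum_fluxMatrix_row_nonpos (hE : IsFirstOrderEndotactic E) (hκ : ∀ e ∈ E, 0 < κ e)
    (i : Fin d) : ∑ j, fluxMatrix E κ i j ≤ 0 := by
  rw [sum_fluxMatrix_row]
  refine sum_nonpos fun ⟨y, y'⟩ he => ?_
  obtain ⟨heE, rfl⟩ : (y, y') ∈ E ∧ y = Pi.single i 1 := mem_filter.1 he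
  exact mul_nonpos_of_nonneg_of_nonpos (hκ _ heE).le (by linarith [hE.sum_snd_le_one heE])

theorem sum_fluxMatrix_row_neg (hE : IsFirstOrderEndotactic E) (hκ : ∀ e ∈ E, 0 < κ e)
    {i : Fin d} (h : Leaks E i) : ∑ j, fluxMatrix E κ i j < 0 := by
  rw [sum_fluxMatrix_row]
  refine sum_neg' (fun ⟨y, y'⟩ he => ?_) ⟨_, mem_filter.2 ⟨h, rfl⟩, by simpa using hκ _ h⟩
  obtain ⟨heE, rfl⟩ : (y, y') ∈ E ∧ y = Pi.single i 1 := mem_filter.1 he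
  exact mul_nonpos_of_nonneg_of_nonpos (hκ _ heE).le (by linarith [hE.sum_snd_le_one heE])

theorem influx_term_nonneg (hE : IsFirstOrderEndotactic E) (hκ : ∀ e ∈ E, 0 < κ e) (j : Fin d)
    {e : Edge d} (he : e ∈ E.filter fun e => e.1 = 0) : 0 ≤ κ e * e.2 j :=
  mul_nonneg (hκ e (mem_filter.1 he).1).le (hE.snd_nonneg (mem_filter.1 he).1 j)

theorem influx_nonneg (hE : IsFirstOrderEndotactic E) (hκ : ∀ e ∈ E, 0 < κ e) (j : Fin d) :
    0 ≤ influx E κ j :=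
  sum_nonneg fun _ he => hE.influx_term_nonneg hκ j he

theorem snd_apply_eq_zero_of_influx_eq_zero (hE : IsFirstOrderEndotactic E)
    (hκ : ∀ e ∈ E, 0 < κ e) {j : Fin d} (hj : influx E κ j = 0) {y' : Vec d}
    (he : ((0 : Vec d), y') ∈ E) : y' j = 0 := by
  have h := (sum_eq_zero_iff_of_nonneg fun _ he => hE.influx_term_nonneg hκ j he).1 hj (0, y')
    (mem_filter.2 ⟨he, rfl⟩)
  exact (mul_eq_zero.1 h).resolve_left (hκ _ he).ne'

end IsFirstOrderEndotactic

section Span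

variable {E : Finset (Edge d)} {κ : Edge d → ℝ}

theorem sum_filter_smul_sub_mem_stoichSpan (p : Edge d → Prop) [DecidablePred p]
    (c : Edge d → ℝ) :
    ∑ e ∈ E.filter p, c e • (e.2 - e.1) ∈ stoichSpan d E :=
  sum_mem fun e he => Submodule.smul_mem _ _ (Submodule.subset_span ⟨e, (mem_filter.1 he).1, rfl⟩)

theorem fluxMatrix_row_mem_stoichSpan (i : Fin d) : fluxMatrix E κ i ∈ stoichSpan d E := by
  have h : fluxMatrix E κ i = ∑ e ∈ E.filter (fun e => e.1 = Pi.single i 1), κ e • (e.2 - e.1) := by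
    ext j
    simp [fluxMatrix, Finset.sum_apply]
  rw [h]
  exact sum_filter_smul_sub_mem_stoichSpan _ _

theorem vecMul_fluxMatrix_mem_stoichSpan (x : Vec d) : x ᵥ* fluxMatrix E κ ∈ stoichSpan d E := by
  rw [vecMul_eq_sum]
  exact sum_mem fun i _ => Submodule.smul_mem _ _ (fluxMatrix_row_mem_stoichSpan i)

theorem influx_mem_stoichSpan : influx E κ ∈ stoichSpan d E := by
  have h : influx E κ = ∑ e ∈ E.filter (fun e => e.1 = 0), κ e • (e.2 - e.1) := by
    ext j
    simp only [influx, Finset.sum_apply, Pi.smul_apply, Pi.sub_apply, smul_eq_mul]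
    exact sum_congr rfl fun e he => by rw [(mem_filter.1 he).2, Pi.zero_apply, sub_zero]
  rw [h]
  exact sum_filter_smul_sub_mem_stoichSpan _ _

end Span

namespace IsFirstOrderEndotactic

variable {E : Finset (Edge d)} {κ : Edge d → ℝ}

theorem sum_reachable_eq_zero_of_mem_stoichSpan (hE : IsFirstOrderEndotactic E) {i : Fin d}
    (hi : ¬ ReachesZero E i) {v : Vec d} (hv : v ∈ stoichSpan d E) :
    ∑ j ∈ reachable E i, v j = 0 := by
  have hclosed : ∀ a b, Flows E a b → a ∈ {k | ReflTransGen (Flows E) i k} →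
      b ∈ {k | ReflTransGen (Flows E) i k} := fun _ _ hab ha => ReflTransGen.tail ha hab
  have hleak : ∀ k ∈ {k | ReflTransGen (Flows E) i k}, ¬ Leaks E k := fun k hk hl => hi ⟨k, hl, hk⟩
  induction hv using Submodule.span_induction with
  | mem w hw =>
    obtain ⟨⟨y, y'⟩, he, rfl⟩ := hw
    simp only [Pi.sub_apply, sum_sub_distrib, sub_eq_zero]
    rcases hE.fst_eq_zero_or_single he with rfl | ⟨a, rfl⟩
    · exact (sum_eq_zero fun j hj => hE.snd_apply_eq_zero_of_mem hclosed hleak he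
        (mem_reachable.1 hj)).trans (sum_eq_zero fun _ _ => rfl).symm
    rw [sum_pi_single']
    rcases hE.snd_eq_zero_or_single he with rfl | ⟨m, rfl⟩
    · rw [if_neg fun ha => hleak a (mem_reachable.1 ha) he]
      exact sum_eq_zero fun _ _ => rfl
    · rw [sum_pi_single']
      exact if_congr ⟨fun hm => mem_reachable.2 (hE.mem_of_flows_of_mem hclosed hleak he
        (mem_reachable.1 hm)), fun ha => mem_reachable.2 ((mem_reachable.1 ha).tail he)⟩ rfl rfl
  | zero => simp
  | add v w _ _ hv hw => simp [sum_add_distrib, hv, hw]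
  | smul c v _ hv => simp [← mul_sum, hv]

theorem sum_reachable_eq_of_sub_mem_stoichSpan (hE : IsFirstOrderEndotactic E) {i : Fin d}
    (hi : ¬ ReachesZero E i) {x y : Vec d} (h : x - y ∈ stoichSpan d E) :
    ∑ j ∈ reachable E i, x j = ∑ j ∈ reachable E i, y j := by
  simpa [sum_sub_distrib, sub_eq_zero] using hE.sum_reachable_eq_zero_of_mem_stoichSpan hi h

theorem nonneg_of_vecMul_fluxMatrix_nonpos (hE : IsFirstOrderEndotactic E)
    (hκ : ∀ e ∈ E, 0 < κ e) {x : Vec d} (hx : ∀ j, (x ᵥ* fluxMatrix E κ) j ≤ 0)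
    (hcls : ∀ i, ¬ ReachesZero E i → 0 ≤ ∑ j ∈ reachable E i, x j) : 0 ≤ x := by
  intro i
  by_contra hi
  replace hi : i ∈ {k | x k < 0} := not_le.1 hi
  have hM := fun a b (hab : a ≠ b) => hE.fluxMatrix_apply_nonneg hκ hab
  have hrow := hE.sum_fluxMatrix_row_nonpos hκ
  have hclosed : ∀ a b, Flows E a b → a ∈ {k | x k < 0} → b ∈ {k | x k < 0} := by
    intro a b hab ha
    rcases eq_or_ne a b with rfl | hne
    · exact ha
    · exact neg_of_vecMul_nonpos hM hrow hx ha (hE.fluxMatrix_apply_pos hκ hne hab)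
  have hleak : ∀ k ∈ {k | x k < 0}, ¬ Leaks E k := fun k hk hl =>
    (hE.sum_fluxMatrix_row_neg hκ hl).ne (row_sum_eq_zero_of_vecMul_nonpos hM hrow hx hk)
  have hneg : ∑ j ∈ reachable E i, x j < 0 :=
    sum_neg (fun j hj => (mem_reachable.1 hj).mem_of_forall_mem hclosed hi)
      ⟨i, self_mem_reachable E i⟩
  exact (hcls i (not_reachesZero_of_mem hclosed hleak hi)).not_gt hneg

theorem eq_zero_of_vecMul_fluxMatrix_eq_zero (hE : IsFirstOrderEndotactic E)
    (hκ : ∀ e ∈ E, 0 < κ e) {v : Vec d} (hv : v ∈ stoichSpan d E)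
    (h : v ᵥ* fluxMatrix E κ = 0) : v = 0 := by
  have hcls := fun i hi => hE.sum_reachable_eq_zero_of_mem_stoichSpan (i := i) hi hv
  refine le_antisymm ?_ (hE.nonneg_of_vecMul_fluxMatrix_nonpos hκ (by simp [h])
    fun i hi => (hcls i hi).ge)
  refine neg_nonneg.1 (hE.nonneg_of_vecMul_fluxMatrix_nonpos hκ (by simp [neg_vecMul, h])
    fun i hi => ?_)
  simp [sum_neg_distrib, hcls i hi]

theorem exists_nonneg_equilibrium (hE : IsFirstOrderEndotactic E) (hκ : ∀ e ∈ E, 0 < κ e)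
    {x₀ : Vec d} (hx₀ : 0 ≤ x₀) :
    ∃ x, x - x₀ ∈ stoichSpan d E ∧ 0 ≤ x ∧ x ᵥ* fluxMatrix E κ + influx E κ = 0 := by
  let T : stoichSpan d E →ₗ[ℝ] stoichSpan d E :=
    (vecMulLinear (fluxMatrix E κ)).restrict fun v _ => vecMul_fluxMatrix_mem_stoichSpan v
  have hT : Function.Surjective T := by
    refine LinearMap.injective_iff_surjective.1 ((injective_iff_map_eq_zero T).2 fun v hv => ?_)
    exact Subtype.ext (hE.eq_zero_of_vecMul_fluxMatrix_eq_zero hκ v.2 (congrArg Subtype.val hv))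
  obtain ⟨v, hv⟩ := hT ⟨-(x₀ ᵥ* fluxMatrix E κ + influx E κ),
    neg_mem (add_mem (vecMul_fluxMatrix_mem_stoichSpan x₀) influx_mem_stoichSpan)⟩
  have hvA : (v : Vec d) ᵥ* fluxMatrix E κ = -(x₀ ᵥ* fluxMatrix E κ + influx E κ) :=
    congrArg Subtype.val hv
  have hxS : x₀ + (v : Vec d) - x₀ ∈ stoichSpan d E := by simp
  have heq : (x₀ + (v : Vec d)) ᵥ* fluxMatrix E κ + influx E κ = 0 := by
    rw [add_vecMul, hvA]
    abel
  refine ⟨x₀ + v, hxS, hE.nonneg_of_vecMul_fluxMatrix_nonpos hκ (fun j => ?_) fun i hi => ?_, heq⟩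
  · have h := congrFun heq j
    simp only [Pi.add_apply, Pi.zero_apply] at h
    linarith [hE.influx_nonneg hκ j]
  · rw [hE.sum_reachable_eq_of_sub_mem_stoichSpan hi hxS]
    exact sum_nonneg fun j _ => hx₀ j

theorem pos_of_equilibrium (hE : IsFirstOrderEndotactic E) (hκ : ∀ e ∈ E, 0 < κ e)
    {x : Vec d} (hx : 0 ≤ x) (heq : x ᵥ* fluxMatrix E κ + influx E κ = 0)
    (hcls : ∀ i, ¬ ReachesZero E i → 0 < ∑ j ∈ reachable E i, x j) : ∀ i, 0 < x i := by
  intro i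
  by_contra hi
  replace hi : i ∈ {k | x k = 0} := le_antisymm (not_lt.1 hi) (hx i)
  have hM := fun a b (hab : a ≠ b) => hE.fluxMatrix_apply_nonneg hκ hab
  have hxA : ∀ j, (x ᵥ* fluxMatrix E κ) j = -influx E κ j := fun j =>
    eq_neg_of_add_eq_zero_left (by simpa using congrFun heq j : (x ᵥ* fluxMatrix E κ) j + _ = 0)
  have hxA' : ∀ j, (x ᵥ* fluxMatrix E κ) j ≤ 0 := fun j => by
    linarith [hxA j, hE.influx_nonneg hκ j]
  have hpred : ∀ a b, Flows E a b → b ∈ {k | x k = 0} → a ∈ {k | x k = 0} := by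
    intro a b hab hb
    rcases eq_or_ne a b with rfl | hne
    · exact hb
    · exact apply_eq_zero_of_vecMul_apply_nonpos hM hx hb (hxA' b)
        (hE.fluxMatrix_apply_pos hκ hne hab)
  have hfeed : ∀ y', ((0 : Vec d), y') ∈ E → ∀ j ∈ {k | x k = 0}, y' j = 0 := by
    intro y' he j hj
    refine hE.snd_apply_eq_zero_of_influx_eq_zero hκ ?_ he
    linarith [hxA j, vecMul_apply_eq_zero_of_apply_eq_zero hM hx hj (hxA' j)]
  have hi' := hE.not_reachesZero_of_mem_of_no_influx hpred hfeed hi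
  have hzero : ∑ j ∈ reachable E i, x j = 0 :=
    sum_eq_zero fun j hj => (hE.reach_symm hi' (mem_reachable.1 hj)).mem_of_forall_mem_rev hpred hi
  exact (hcls i hi').ne' hzero

end IsFirstOrderEndotactic

theorem stmt17_general {d : ℕ} (E : Finset (Edge d)) (κ : Edge d → ℝ)
    (hκ : ∀ e ∈ E, 0 < κ e)
    (hnat : ∀ y, InV E y → ∀ i, ∃ n : ℕ, y i = (n : ℝ))
    (hfo : ∀ y, IsSource E y → ∑ i, y i ≤ 1)
    (hendo : Endotactic E)
    (A : Matrix (Fin d) (Fin d) ℝ)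
    (hA : ∀ i j, A i j =
      ∑ e ∈ E.filter (fun e => e.1 = (Pi.single i 1 : Vec d)), κ e * (e.2 j - e.1 j))
    (b : Vec d)
    (hb : ∀ i, b i = ∑ e ∈ E.filter (fun e => e.1 = (0 : Vec d)), κ e * e.2 i) :
    ∀ x₀ : Vec d, (∀ i, 0 ≤ x₀ i) →
      (∃! x : Vec d, (x - x₀ ∈ stoichSpan d E ∧ ∀ i, 0 ≤ x i) ∧ x ᵥ* A + b = 0) ∧
      ((∃ z : Vec d, z - x₀ ∈ stoichSpan d E ∧ ∀ i, 0 < z i) →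
        ∀ x : Vec d, (x - x₀ ∈ stoichSpan d E ∧ ∀ i, 0 ≤ x i) → x ᵥ* A + b = 0 →
          ∀ i, 0 < x i) := by
  have hE : IsFirstOrderEndotactic E := ⟨hnat, hfo, hendo⟩
  obtain rfl : A = fluxMatrix E κ := Matrix.ext hA
  obtain rfl : b = influx E κ := funext hb
  intro x₀ hx₀
  refine ⟨?_, fun ⟨z, hzS, hz⟩ x ⟨hxS, hx⟩ hxeq => hE.pos_of_equilibrium hκ hx hxeq fun i hi => ?_⟩
  · obtain ⟨x, hxS, hx, hxeq⟩ := hE.exists_nonneg_equilibrium hκ hx₀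
    refine ⟨x, ⟨⟨hxS, hx⟩, hxeq⟩, fun y ⟨⟨hyS, _⟩, hyeq⟩ => ?_⟩
    refine sub_eq_zero.1 (hE.eq_zero_of_vecMul_fluxMatrix_eq_zero hκ ?_ ?_)
    · simpa using sub_mem hyS hxS
    · rw [sub_vecMul, ← add_sub_add_right_eq_sub _ _ (influx E κ), hyeq, hxeq, sub_self]
  · rw [hE.sum_reachable_eq_of_sub_mem_stoichSpan hi (by simpa using sub_mem hxS hzS)]
    exact sum_pos (fun j _ => hz j) ⟨i, self_mem_reachable E i⟩

/-- For a first order endotactic mass-action system, each stoichiometric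
compatibility class `(x₀ + S_G) ∩ ℝ₊^d` contains exactly one equilibrium of
`ẋ = xA + b`, and this equilibrium is entrywise positive whenever the class is
positive (contains an entrywise positive point). -/
theorem stmt17 {d : ℕ} (E : Finset (Edge d)) (κ : Edge d → ℝ)
    (hsimple : ∀ e ∈ E, e.1 ≠ e.2)
    (hκ : ∀ e ∈ E, 0 < κ e)
    (hnat : ∀ y, InV E y → ∀ i, ∃ n : ℕ, y i = (n : ℝ))
    (hfo : ∀ y, IsSource E y → ∑ i, y i ≤ 1)
    (hnored : ∀ i : Fin d, ∃ e ∈ E, e.2 i ≠ e.1 i)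
    (hendo : Endotactic E)
    (A : Matrix (Fin d) (Fin d) ℝ)
    (hA : ∀ i j, A i j =
      ∑ e ∈ E.filter (fun e => e.1 = (Pi.single i 1 : Vec d)), κ e * (e.2 j - e.1 j))
    (b : Vec d)
    (hb : ∀ i, b i = ∑ e ∈ E.filter (fun e => e.1 = (0 : Vec d)), κ e * e.2 i) :
    ∀ x₀ : Vec d, (∀ i, 0 ≤ x₀ i) →
      (∃! x : Vec d, (x - x₀ ∈ stoichSpan d E ∧ ∀ i, 0 ≤ x i) ∧ x ᵥ* A + b = 0) ∧
      ((∃ z : Vec d, z - x₀ ∈ stoichSpan d E ∧ ∀ i, 0 < z i) →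
        ∀ x : Vec d, (x - x₀ ∈ stoichSpan d E ∧ ∀ i, 0 ≤ x i) → x ᵥ* A + b = 0 →
          ∀ i, 0 < x i) :=
  stmt17_general E κ hκ hnat hfo hendo A hA b hb
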